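/- Let m, n ≥ 2 be integers and let P_m □ P_n denote the Cartesian product of the paths P_m and P_n (the m × n grid graph). Then the 2-Grundy domination number satisfies γ_gr^2(P_m □ P_n) = mn − 1. -/

import Mathlib

/-- A sequence `S` of distinct vertices is a generalized `k`-Grundy sequence with respect to
neighborhood assignments `N₁` (where the footprinted vertex must lie relative to the new
vertex) and `N₂` (the neighborhoods of earlier vertices that must contain the footprinted
vertex fewer than `k` times): for each position `i` there is a vertex `u ∈ N₁ (S i)` that
belongs to `N₂ w` for fewer than `k` of the vertices `w` preceding position `i`. -/
def IsGrundySeq {V : Type*} (k : ℕ) (N₁ N₂ : V → Set V) (S : List V) : Prop :=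
  S.Nodup ∧ ∀ (i : ℕ) (hi : i < S.length),
    ∃ u ∈ N₁ (S.get ⟨i, hi⟩), {w | w ∈ S.take i ∧ u ∈ N₂ w}.ncard < k

/-- The length of a longest generalized `k`-Grundy sequence. -/
noncomputable def grundyVal {V : Type*} (k : ℕ) (N₁ N₂ : V → Set V) : ℕ :=
  sSup {m | ∃ S : List V, IsGrundySeq k N₁ N₂ S ∧ S.length = m}

/-- The closed neighborhood `N[v]` of a vertex. -/
def closedNbhd {V : Type*} (G : SimpleGraph V) (v : V) : Set V :=
  insert v (G.neighborSet v)

/-- The `k`-Grundy domination number `γ_gr^k(G)`. -/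
noncomputable def kGrundy {V : Type*} (G : SimpleGraph V) (k : ℕ) : ℕ :=
  grundyVal k (closedNbhd G) (closedNbhd G)

/-- The `k`-`L`-Grundy domination number `γ_gr^{L,k}(G)`. -/
noncomputable def kLGrundy {V : Type*} (G : SimpleGraph V) (k : ℕ) : ℕ :=
  grundyVal k (closedNbhd G) G.neighborSet

/-- The `k`-`Z`-Grundy domination number `γ_gr^{Z,k}(G)`. -/
noncomputable def kZGrundy {V : Type*} (G : SimpleGraph V) (k : ℕ) : ℕ :=
  grundyVal k G.neighborSet (closedNbhd G)

/-- The `k`-`t`-Grundy domination number `γ_gr^{t,k}(G)`. -/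
noncomputable def ktGrundy {V : Type*} (G : SimpleGraph V) (k : ℕ) : ℕ :=
  grundyVal k G.neighborSet G.neighborSet

/-!
Upper bound: in a 2-sequence containing every vertex, the footprint `u` of the last vertex `v`
lies in `N[w]` for every `w ∈ N[u] \ {v}`, and since every grid vertex has degree at least 2
these are at least two earlier vertices.

Lower bound: list all vertices but the bottom-right corner in row-major order. A vertex outside
the last row footprints the vertex below it, which no earlier vertex dominates; a vertex of the
last row footprints its right neighbor, which among earlier vertices only the one above it
dominates.
-/

open SimpleGraph

section Grundy

variable {V : Type*} {k : ℕ}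

lemma mem_closedNbhd {G : SimpleGraph V} {u v : V} :
    u ∈ closedNbhd G v ↔ u = v ∨ G.Adj v u := by
  simp [closedNbhd]

lemma mem_closedNbhd_comm {G : SimpleGraph V} {u v : V} :
    u ∈ closedNbhd G v ↔ v ∈ closedNbhd G u := by
  simp only [mem_closedNbhd, G.adj_comm, eq_comm]

lemma ncard_closedNbhd [Finite V] (G : SimpleGraph V) (v : V) :
    (closedNbhd G v).ncard = (G.neighborSet v).ncard + 1 :=
  Set.ncard_insert_of_notMem G.notMem_neighborSet_self

lemma isGrundySeq_nil (N₁ N₂ : V → Set V) : IsGrundySeq k N₁ N₂ [] :=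
  ⟨List.nodup_nil, fun _ hi => absurd hi (Nat.not_lt_zero _)⟩

lemma grundyVal_le {N₁ N₂ : V → Set V} {B : ℕ}
    (h : ∀ S, IsGrundySeq k N₁ N₂ S → S.length ≤ B) : grundyVal k N₁ N₂ ≤ B :=
  csSup_le ⟨0, [], isGrundySeq_nil N₁ N₂, rfl⟩ fun _ ⟨S, hS, hlen⟩ => hlen ▸ h S hS

lemma IsGrundySeq.length_le_grundyVal [Fintype V] {N₁ N₂ : V → Set V} {S : List V}
    (hS : IsGrundySeq k N₁ N₂ S) : S.length ≤ grundyVal k N₁ N₂ :=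
  le_csSup ⟨Fintype.card V, fun _ ⟨_, hT, hlen⟩ => hlen ▸ hT.1.length_le_card⟩ ⟨S, hS, rfl⟩

lemma List.Pairwise.mem_take_iff {α : Type*} [Preorder α] {r : V → α} {S : List V}
    (hS : S.Pairwise (r · < r ·)) {i : ℕ} (hi : i < S.length) {w : V} :
    w ∈ S.take i ↔ w ∈ S ∧ r w < r S[i] := by
  rw [← S.take_append_drop i, List.pairwise_append] at hS
  obtain ⟨-, hdrop, hcross⟩ := hS
  rw [List.drop_eq_getElem_cons hi] at hdrop hcross
  rw [List.pairwise_cons] at hdrop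
  constructor
  · intro hw
    exact ⟨List.mem_of_mem_take hw, hcross w hw S[i] List.mem_cons_self⟩
  · rintro ⟨hw, hlt⟩
    rw [← S.take_append_drop i, List.drop_eq_getElem_cons hi] at hw
    simp only [List.mem_append, List.mem_cons] at hw
    rcases hw with htake | rfl | hlater
    · exact htake
    · exact absurd hlt (lt_irrefl _)
    · exact absurd hlt (hdrop.1 w hlater).not_gt

lemma isGrundySeq_of_pairwise {α : Type*} [Preorder α] {r : V → α} {N₁ N₂ : V → Set V}
    {S : List V} (hS : S.Pairwise (r · < r ·))
    (h : ∀ v ∈ S, ∃ u ∈ N₁ v, {w | w ∈ S ∧ r w < r v ∧ u ∈ N₂ w}.ncard < k) :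
    IsGrundySeq k N₁ N₂ S := by
  refine ⟨hS.nodup, fun i hi => ?_⟩
  obtain ⟨u, hu, hfew⟩ := h S[i] (List.getElem_mem hi)
  refine ⟨u, hu, ?_⟩
  simpa only [hS.mem_take_iff hi, and_assoc] using hfew

lemma card_sub_one_le_grundyVal [Fintype V] {W : Type*} [LinearOrder W] [Fintype W]
    {N₁ N₂ : V → Set V} (e : V ≃ W) (c : V)
    (h : ∀ v ≠ c, ∃ u ∈ N₁ v, {w | e w < e v ∧ u ∈ N₂ w}.ncard < k) :
    Fintype.card V - 1 ≤ grundyVal k N₁ N₂ := by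
  classical
  set S := ((Finset.univ.erase (e c)).sort (· ≤ ·)).map e.symm
  have hsorted : S.Pairwise (e · < e ·) := by
    simpa [S, List.pairwise_map] using (Finset.sortedLT_sort (Finset.univ.erase (e c))).pairwise
  have hlen : S.length = Fintype.card V - 1 := by
    simp [S, Finset.card_erase_of_mem, Fintype.card_congr e]
  have hS : IsGrundySeq k N₁ N₂ S := by
    refine isGrundySeq_of_pairwise hsorted fun v hv => ?_
    have hvc : v ≠ c := by simpa [S, e.symm_apply_eq] using hv
    obtain ⟨u, hu, hfew⟩ := h v hvc
    exact ⟨u, hu, lt_of_le_of_lt (Set.ncard_le_ncard (fun w hw => hw.2) (Set.toFinite _)) hfew⟩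
  exact hlen ▸ hS.length_le_grundyVal

lemma IsGrundySeq.length_le_card_sub_one [Fintype V] {G : SimpleGraph V}
    (hdeg : ∀ u, k ≤ (G.neighborSet u).ncard) {S : List V}
    (hS : IsGrundySeq k (closedNbhd G) (closedNbhd G) S) : S.length ≤ Fintype.card V - 1 := by
  classical
  by_contra! hlong
  have hlen : S.length = Fintype.card V := le_antisymm hS.1.length_le_card (by omega)
  have hne : S ≠ [] := List.ne_nil_of_length_pos (by omega)
  have hmem (w : V) : w ∈ S := by
    have : S.toFinset = Finset.univ :=
      Finset.eq_univ_of_card _ (by rw [List.toFinset_card_of_nodup hS.1, hlen])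
    exact List.mem_toFinset.1 (this ▸ Finset.mem_univ w)
  obtain ⟨u, hu, hfew⟩ := hS.2 (S.length - 1) (by omega)
  set v := S.get ⟨S.length - 1, by omega⟩
  have hprefix (w : V) (hw : w ≠ v) : w ∈ S.take (S.length - 1) := by
    have := hmem w
    rw [← List.dropLast_append_getLast hne, List.getLast_eq_getElem, List.mem_append,
      List.mem_singleton, List.dropLast_eq_take] at this
    exact this.resolve_right hw
  have hsub : closedNbhd G u \ {v} ⊆ {w | w ∈ S.take (S.length - 1) ∧ u ∈ closedNbhd G w} :=
    fun w ⟨hw, hwv⟩ => ⟨hprefix w hwv, mem_closedNbhd_comm.1 hw⟩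
  have : k ≤ {w | w ∈ S.take (S.length - 1) ∧ u ∈ closedNbhd G w}.ncard :=
    calc k ≤ (closedNbhd G u).ncard - 1 := by rw [ncard_closedNbhd]; exact (hdeg u).trans (by omega)
      _ ≤ (closedNbhd G u \ {v}).ncard := Set.pred_ncard_le_ncard_sdiff_singleton _ _
      _ ≤ _ := Set.ncard_le_ncard hsub (Set.toFinite _)
  omega

lemma kGrundy_le_card_sub_one [Fintype V] {G : SimpleGraph V}
    (hdeg : ∀ u, k ≤ (G.neighborSet u).ncard) : kGrundy G k ≤ Fintype.card V - 1 :=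
  grundyVal_le fun _ hS => hS.length_le_card_sub_one hdeg

end Grundy

lemma pathGraph_exists_adj {n : ℕ} (hn : 2 ≤ n) (i : Fin n) : ∃ j, (pathGraph n).Adj i j := by
  by_cases hi : (i : ℕ) + 1 < n
  · exact ⟨⟨i + 1, hi⟩, pathGraph_adj.2 (Or.inl rfl)⟩
  · exact ⟨⟨i - 1, by omega⟩, pathGraph_adj.2 (Or.inr (by simp; omega))⟩

lemma two_le_ncard_neighborSet_boxProd {α β : Type*} [Finite α] [Finite β]
    {G : SimpleGraph α} {H : SimpleGraph β} (hG : ∀ a, ∃ a', G.Adj a a')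
    (hH : ∀ b, ∃ b', H.Adj b b') (x : α × β) : 2 ≤ ((G □ H).neighborSet x).ncard := by
  obtain ⟨a', ha⟩ := hG x.1
  obtain ⟨b', hb⟩ := hH x.2
  have hne : (a', x.2) ≠ (x.1, b') := fun h => ha.ne (congrArg Prod.fst h).symm
  calc 2 = ({(a', x.2), (x.1, b')} : Set (α × β)).ncard := (Set.ncard_pair hne).symm
    _ ≤ _ := Set.ncard_le_ncard (by simp [Set.insert_subset_iff, boxProd_adj, ha, hb])

lemma exists_footprint_grid {m n : ℕ} (v : Fin m × Fin n)
    (hv : (v.1 : ℕ) + 1 < m ∨ (v.2 : ℕ) + 1 < n) :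
    ∃ u ∈ closedNbhd (pathGraph m □ pathGraph n) v,
      {w | toLex w < toLex v ∧ u ∈ closedNbhd (pathGraph m □ pathGraph n) w}.ncard < 2 := by
  rcases hv with hdown | hright
  · refine ⟨(⟨v.1 + 1, hdown⟩, v.2), ?_, ?_⟩
    · simp [mem_closedNbhd, boxProd_adj, pathGraph_adj]
    · suffices {w | toLex w < toLex v ∧ (⟨v.1 + 1, hdown⟩, v.2) ∈
          closedNbhd (pathGraph m □ pathGraph n) w} = ∅ by simp [this]
      ext w
      simp only [Prod.Lex.toLex_lt_toLex, Fin.ext_iff, mem_closedNbhd, Prod.ext_iff, boxProd_adj,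
        pathGraph_adj, Nat.add_right_cancel_iff, Set.mem_ofPred_eq, Set.mem_empty_iff_false,
        iff_false, not_and, not_or]
      omega
  · refine ⟨(v.1, ⟨v.2 + 1, hright⟩), ?_, ?_⟩
    · simp [mem_closedNbhd, boxProd_adj, pathGraph_adj]
    · refine Nat.lt_succ_of_le ((Set.ncard_le_one (Set.toFinite _)).2 fun w hw w' hw' => ?_)
      simp only [Prod.Lex.toLex_lt_toLex, Fin.ext_iff, mem_closedNbhd, Prod.ext_iff, boxProd_adj,
        pathGraph_adj, Nat.add_right_cancel_iff, Set.mem_ofPred_eq] at hw hw' ⊢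
      omega

/-- For `m, n ≥ 2`, the `2`-Grundy domination number of the grid `P_m □ P_n` is `mn - 1`. -/
theorem kGrundy_grid (m n : ℕ) (hm : 2 ≤ m) (hn : 2 ≤ n) :
    kGrundy (SimpleGraph.pathGraph m □ SimpleGraph.pathGraph n) 2 = m * n - 1 := by
  have hcard : Fintype.card (Fin m × Fin n) = m * n := by simp
  rw [← hcard]
  apply le_antisymm
  · exact kGrundy_le_card_sub_one
      (two_le_ncard_neighborSet_boxProd (pathGraph_exists_adj hm) (pathGraph_exists_adj hn))
  · refine card_sub_one_le_grundyVal toLex (⟨m - 1, by omega⟩, ⟨n - 1, by omega⟩)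
      fun v hv => exists_footprint_grid v ?_
    contrapose! hv
    ext <;> dsimp only <;> omega
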